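/- arXiv:1805.02426 — 5 statements merged into one kernel-verified Lean document; each statement's English description precedes it below -/
import Mathlib

section
/- If 0 < q ≤ p < 1/2 and ε_d ∈ (0,1), then for every sequence of key sizes Δ(n) no positive relative throughput is achievable: for every r > 0 there is no (1 − ε_d)-covert sequence of codes with Δ(n) key bits, (log₂ N_n)/√n ≥ r for all n, and P_err → 0. Equivalently, the covert capacity r*_{Δ(n),ε_d}(p,q) = 0. -/
/-!
Covert communication over an adversarially jammed binary channel.

A code with blocklength `n`, `N` messages and `Δ` key bits consists of an
encoder `Fin N → key → {0,1}^n` and a decoder `{0,1}^n → key → {0,…,N}`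
(we model the output `0` ("declare silence") as `Option.none`).
When Alice is silent she transmits the all-zeros vector.
James observes `Z = X ⊕ S̄` with `S̄` i.i.d. Bernoulli(q); a jamming strategy is a
stochastic kernel from observations `z` to jamming vectors `s` of Hamming
weight at most `p·n`.  Bob receives `Y = X ⊕ S`.
-/

namespace CovertComm

open Finset Filter

/-- Binary vectors of length `n`. -/
abbrev BV (n : ℕ) := Fin n → Bool

/-- Coordinatewise XOR of binary vectors. -/
def vxor {n : ℕ} (x y : BV n) : BV n := fun i => Bool.xor (x i) (y i)

/-- Hamming weight. -/
def wt {n : ℕ} (x : BV n) : ℕ := (Finset.univ.filter fun i => x i = true).card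

/-- Probability that an i.i.d. Bernoulli(q) noise vector equals `z`. -/
noncomputable def noiseP {n : ℕ} (q : ℝ) (z : BV n) : ℝ :=
  ∏ i, if z i then q else 1 - q

/-- A code: encoder and decoder.  Decoder output `none` means "declare 0 (silence)". -/
structure Code (n N Δ : ℕ) where
  enc : Fin N → BV Δ → BV n
  dec : BV n → BV Δ → Option (Fin N)

/-- A jamming strategy: a stochastic kernel `W z s`, supported on jamming
vectors of Hamming weight at most `p·n`. -/
structure Jammer (n : ℕ) (p : ℝ) where
  W : BV n → BV n → ℝ
  nonneg : ∀ z s, 0 ≤ W z s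
  sum_one : ∀ z, ∑ s : BV n, W z s = 1
  wt_le : ∀ z s, W z s ≠ 0 → (wt s : ℝ) ≤ p * n

/-- False-alarm probability of detector `Φ`: when `T = 0`, `Z` is pure
Bernoulli(q) noise. -/
noncomputable def PFA {n : ℕ} (q : ℝ) (Φ : BV n → Bool) : ℝ :=
  ∑ z : BV n, noiseP q z * (if Φ z then (1 : ℝ) else 0)

/-- Missed-detection probability of detector `Φ`: when `T = 1`, the message and
key are uniform and `Z = Enc(M,K) ⊕ S̄`. -/
noncomputable def PMD {n N Δ : ℕ} (q : ℝ) (C : Code n N Δ) (Φ : BV n → Bool) : ℝ :=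
  (1 / ((N : ℝ) * 2 ^ Δ)) * ∑ m : Fin N, ∑ k : BV Δ, ∑ z : BV n,
    noiseP q (vxor z (C.enc m k)) * (if Φ z then (0 : ℝ) else 1)

/-- Probability of decoding error when Alice is active:
`P(Dec(Enc(M,K) ⊕ S, K) ≠ M | T = 1)` with uniform `M, K`, where
`S` is drawn from `J.W` applied to James' observation `Enc(M,K) ⊕ S̄`. -/
noncomputable def errActive {n N Δ : ℕ} {p : ℝ} (q : ℝ) (C : Code n N Δ)
    (J : Jammer n p) : ℝ :=
  (1 / ((N : ℝ) * 2 ^ Δ)) * ∑ m : Fin N, ∑ k : BV Δ, ∑ zb : BV n,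
    noiseP q zb * ∑ s : BV n, J.W (vxor (C.enc m k) zb) s *
      (if C.dec (vxor (C.enc m k) s) k = some m then (0 : ℝ) else 1)

/-- Probability of decoding error when Alice is silent:
`P(Dec(S, K) ≠ 0 | T = 0)`, where `S` is drawn from `J.W` applied to the pure
noise observation. -/
noncomputable def errSilent {n N Δ : ℕ} {p : ℝ} (q : ℝ) (C : Code n N Δ)
    (J : Jammer n p) : ℝ :=
  (1 / (2 ^ Δ : ℝ)) * ∑ k : BV Δ, ∑ zb : BV n,
    noiseP q zb * ∑ s : BV n, J.W zb s *
      (if C.dec s k = Option.none then (0 : ℝ) else 1)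

/-- `P_err`: worst case over jamming strategies of the sum of the two error
probabilities. -/
noncomputable def Perr {n N Δ : ℕ} (p q : ℝ) (C : Code n N Δ) : ℝ :=
  ⨆ J : Jammer n p, (errSilent q C J + errActive q C J)

/-- `min_Φ (P_FA(Φ) + P_MD(Φ))` for a given code. -/
noncomputable def covertGap {n N Δ : ℕ} (q : ℝ) (C : Code n N Δ) : ℝ :=
  ⨅ Φ : BV n → Bool, (PFA q Φ + PMD q C Φ)

/-- A sequence of codes is `(1 − εd)`-covert if
`liminf_n min_Φ (P_FA + P_MD) ≥ 1 − εd`. -/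
def IsCovertSeq (q εd : ℝ) (N Δ : ℕ → ℕ) (C : ∀ n, Code n (N n) (Δ n)) : Prop :=
  1 - εd ≤ Filter.liminf (fun n => covertGap q (C n)) Filter.atTop

/-- Relative throughput `r` is achievable with key sizes `Δ(n)`: there is a
`(1 − εd)`-covert sequence of codes with `Δ(n)` key bits, relative throughput
at least `r` at every (positive) blocklength, and `P_err → 0`. -/
def Achievable (p q εd : ℝ) (Δ : ℕ → ℕ) (r : ℝ) : Prop :=
  ∃ (N : ℕ → ℕ) (C : ∀ n, Code n (N n) (Δ n)),
    IsCovertSeq q εd N Δ C ∧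
    (∀ n : ℕ, 1 ≤ n → r ≤ Real.logb 2 (N n) / Real.sqrt n) ∧
    Filter.Tendsto (fun n => Perr p q (C n)) Filter.atTop (nhds 0)

/-- The Gaussian `Q`-function. -/
noncomputable def Qfun (x : ℝ) : ℝ :=
  ∫ u in Set.Ioi x, Real.exp (-u ^ 2 / 2) / Real.sqrt (2 * Real.pi)

/-- Inverse of the `Q`-function. -/
noncomputable def Qinv : ℝ → ℝ := Function.invFun Qfun

/-- The code-weight parameter `t(q, εd)`. -/
noncomputable def tpar (q εd : ℝ) : ℝ :=
  2 * Real.sqrt (q * (1 - q)) / (1 - 2 * q) * Qinv ((1 - εd) / 2)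

/-- Weight-normalized mutual information for Bob, `I_B(p,q)`. -/
noncomputable def IB (p q : ℝ) : ℝ :=
  p * (q - 1) / q *
      Real.logb 2 ((q - p + p * q) * (1 - p) / (p ^ 2 * (1 - q)))
    + Real.logb 2 ((q - p + p * q) / (p * q))

/-- Weight-normalized mutual information for James, `I_J(q)`. -/
noncomputable def IJ (q : ℝ) : ℝ := (1 - 2 * q) * Real.logb 2 ((1 - q) / q)

end CovertComm

/-!
James can afford to replay his own observation `x ⊕ s̄` whenever its weight is at most `p n`;
Bob then receives `x ⊕ (x ⊕ s̄) = s̄`, which is also what he receives when Alice is silent, so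
he errs under one of the two hypotheses. Replaying is possible when `wt x ≤ β` and
`wt s̄ ≤ p n - β`. Covertness forces a fixed fraction of codewords to have weight `O(√n)`,
since otherwise the threshold detector `wt z ≥ q n + a √n` would work (Chebyshev). And
because `q ≤ p`, the noise weight falls `O(√n)` below its mean `q n` with probability bounded
away from `0` (change of measure from Bernoulli(`q`) to Bernoulli(`q - O(1/√n)`)). Hence the
error probability is bounded away from `0`.
-/

namespace CovertComm

open Finset Filter

lemma sum_mul_le_one {ι : Type*} [Fintype ι] {w f : ι → ℝ} (hw : ∀ i, 0 ≤ w i)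
    (hw1 : ∑ i, w i = 1) (hf : ∀ i, f i ≤ 1) : ∑ i, w i * f i ≤ 1 :=
  calc ∑ i, w i * f i ≤ ∑ i, w i * 1 :=
        sum_le_sum fun i _ => mul_le_mul_of_nonneg_left (hf i) (hw i)
    _ = 1 := by simpa using hw1

section Vectors

variable {n : ℕ}

lemma vxor_vxor_cancel_left (x y : BV n) : vxor x (vxor x y) = y := by
  funext i
  simp [vxor]

lemma wt_vxor_le (x y : BV n) : wt (vxor x y) ≤ wt x + wt y := by
  refine (card_le_card fun i hi => ?_).trans (card_union_le _ _)
  cases hx : x i <;> cases hy : y i <;> simp_all [vxor]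

lemma wt_zero : wt (fun _ => false : BV n) = 0 := by
  simp [wt]

lemma wt_eq_sum (z : BV n) : (wt z : ℝ) = ∑ i, if z i then 1 else 0 := by
  rw [wt, card_filter]
  push_cast
  rfl

lemma sum_ite_eq_add_mul_wt (z : BV n) (a b : ℝ) :
    ∑ i, (if z i then a else b) = b * n + (a - b) * wt z := by
  have h : ∀ i, (if z i then a else b) = b + (a - b) * if z i then 1 else 0 := by
    intro i; split <;> ring
  simp only [h, sum_add_distrib, sum_const, card_univ, Fintype.card_fin, nsmul_eq_mul,
    ← mul_sum, ← wt_eq_sum]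
  ring

end Vectors

noncomputable def prodBern {n : ℕ} (r : Fin n → ℝ) (z : BV n) : ℝ :=
  ∏ i, if z i then r i else 1 - r i

section ProdBern

variable {n : ℕ} {r : Fin n → ℝ}

lemma prodBern_nonneg (hr : ∀ i, r i ∈ Set.Icc (0 : ℝ) 1) (z : BV n) : 0 ≤ prodBern r z :=
  prod_nonneg fun i _ => by
    have := hr i
    split <;> simp_all [Set.mem_Icc]

lemma sum_prodBern_mul_prod (r : Fin n → ℝ) (s : Finset (Fin n)) (h : Fin n → Bool → ℝ) :
    ∑ z : BV n, prodBern r z * ∏ i ∈ s, h i (z i)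
      = ∏ i ∈ s, ((1 - r i) * h i false + r i * h i true) := by
  classical
  set g : Fin n → Bool → ℝ :=
    fun i b => (if b then r i else 1 - r i) * if i ∈ s then h i b else 1
  have hz : ∀ z : BV n, prodBern r z * ∏ i ∈ s, h i (z i) = ∏ i, g i (z i) := by
    intro z
    rw [prod_mul_distrib, prod_ite_mem, univ_inter, prodBern]
  have hi : ∀ i, ∑ b, g i b
      = if i ∈ s then (1 - r i) * h i false + r i * h i true else 1 := by
    intro i
    rw [Fintype.sum_bool]
    split_ifs with hs <;> simp only [g, hs, if_true, if_false, Bool.false_eq_true] <;> ring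
  simp only [hz, ← Fintype.prod_sum, hi, prod_ite_mem, univ_inter]

lemma sum_prodBern (r : Fin n → ℝ) : ∑ z : BV n, prodBern r z = 1 := by
  simpa using sum_prodBern_mul_prod r ∅ fun _ _ => 1

lemma sum_prodBern_mul_sq_sub (r : Fin n → ℝ) :
    ∑ z : BV n, prodBern r z * ((wt z : ℝ) - ∑ i, r i) ^ 2 = ∑ i, r i * (1 - r i) := by
  set X : Fin n → Bool → ℝ := fun i b => (if b then 1 else 0) - r i
  have hexpand : ∀ z : BV n,
      ((wt z : ℝ) - ∑ i, r i) ^ 2 = ∑ i, ∑ j, X i (z i) * X j (z j) := by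
    intro z
    rw [wt_eq_sum, ← sum_sub_distrib, sq, sum_mul_sum]
  have hcov : ∀ i j, ∑ z : BV n, prodBern r z * (X i (z i) * X j (z j))
      = if i = j then r i * (1 - r i) else 0 := by
    intro i j
    split_ifs with hij
    · subst hij
      have := sum_prodBern_mul_prod r {i} fun _ b => X i b * X i b
      simp only [prod_singleton] at this
      rw [this]
      simp only [X, if_true, if_false, Bool.false_eq_true]
      ring
    · have := sum_prodBern_mul_prod r {i, j} X
      simp only [prod_pair hij] at this
      rw [this]
      simp only [X, if_true, if_false, Bool.false_eq_true]
      ring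
  calc ∑ z : BV n, prodBern r z * ((wt z : ℝ) - ∑ i, r i) ^ 2
      = ∑ i, ∑ j, ∑ z : BV n, prodBern r z * (X i (z i) * X j (z j)) := by
        simp only [hexpand, mul_sum]
        rw [sum_comm]
        exact sum_congr rfl fun i _ => sum_comm
    _ = ∑ i, r i * (1 - r i) := by simp [hcov]

lemma sum_prodBern_mul_indicator_le (hr : ∀ i, r i ∈ Set.Icc (0 : ℝ) 1) {t : ℝ} (ht : 0 < t)
    (A : BV n → Prop) [DecidablePred A] (hA : ∀ z, A z → t ≤ |(wt z : ℝ) - ∑ i, r i|) :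
    ∑ z : BV n, prodBern r z * (if A z then 1 else 0) ≤ (∑ i, r i * (1 - r i)) / t ^ 2 := by
  have hpt : ∀ z, (if A z then (1 : ℝ) else 0) ≤ ((wt z : ℝ) - ∑ i, r i) ^ 2 / t ^ 2 := by
    intro z
    split_ifs with h
    · rw [one_le_div (by positivity), ← sq_abs ((wt z : ℝ) - _)]
      exact pow_le_pow_left₀ ht.le (hA z h) 2
    · positivity
  calc ∑ z : BV n, prodBern r z * (if A z then 1 else 0)
      ≤ ∑ z : BV n, prodBern r z * (((wt z : ℝ) - ∑ i, r i) ^ 2 / t ^ 2) :=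
        sum_le_sum fun z _ => mul_le_mul_of_nonneg_left (hpt z) (prodBern_nonneg hr z)
    _ = (∑ i, r i * (1 - r i)) / t ^ 2 := by
        simp only [mul_div_assoc', ← sum_div, sum_prodBern_mul_sq_sub]

end ProdBern

section Noise

variable {n : ℕ} {q : ℝ}

lemma noiseP_eq_prodBern (q : ℝ) (z : BV n) : noiseP q z = prodBern (fun _ => q) z := rfl

lemma noiseP_vxor_eq_prodBern (q : ℝ) (x z : BV n) :
    noiseP q (vxor z x) = prodBern (fun i => if x i then 1 - q else q) z :=
  prod_congr rfl fun i _ => by cases hz : z i <;> cases hx : x i <;> simp [vxor, hz, hx]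

lemma noiseP_nonneg (hq0 : 0 ≤ q) (hq1 : q ≤ 1) (z : BV n) : 0 ≤ noiseP q z :=
  prodBern_nonneg (fun _ => ⟨hq0, hq1⟩) z

lemma sum_noiseP (q : ℝ) : ∑ z : BV n, noiseP q z = 1 := sum_prodBern _

lemma sum_noiseP_vxor (q : ℝ) (x : BV n) : ∑ z : BV n, noiseP q (vxor z x) = 1 := by
  simp only [noiseP_vxor_eq_prodBern, sum_prodBern]

lemma sum_noiseP_mul_indicator_le (hq0 : 0 ≤ q) (hq1 : q ≤ 1) {t : ℝ} (ht : 0 < t)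
    (A : BV n → Prop) [DecidablePred A] (hA : ∀ z, A z → t ≤ |(wt z : ℝ) - q * n|) :
    ∑ z : BV n, noiseP q z * (if A z then 1 else 0) ≤ n * (q * (1 - q)) / t ^ 2 := by
  have hμ : ∑ _i : Fin n, q = q * n := by simp [mul_comm]
  simpa [noiseP_eq_prodBern] using
    sum_prodBern_mul_indicator_le (fun _ => ⟨hq0, hq1⟩) ht A (by simpa [hμ] using hA)

lemma three_div_four_le_sum_noiseP_near_mean (hq0 : 0 ≤ q) (hq1 : q ≤ 1) (hn0 : 0 < n) :
    3 / 4 ≤ ∑ z : BV n,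
      noiseP q z * (if |(wt z : ℝ) - q * n| ≤ Real.sqrt n then 1 else 0) := by
  have hs : 0 < Real.sqrt n := Real.sqrt_pos.2 (by exact_mod_cast hn0)
  have hout := sum_noiseP_mul_indicator_le hq0 hq1 hs
    (fun z => ¬ |(wt z : ℝ) - q * n| ≤ Real.sqrt n) fun z hz => (not_le.1 hz).le
  rw [Real.sq_sqrt (Nat.cast_nonneg n), mul_div_cancel_left₀ _ (by positivity)] at hout
  have hsplit : ∀ z : BV n, noiseP q z * (if |(wt z : ℝ) - q * n| ≤ Real.sqrt n then 1 else 0)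
      = noiseP q z - noiseP q z * (if ¬ |(wt z : ℝ) - q * n| ≤ Real.sqrt n then 1 else 0) := by
    intro z; split_ifs <;> ring
  rw [sum_congr rfl fun z _ => hsplit z, sum_sub_distrib, sum_noiseP]
  nlinarith [sq_nonneg (q - 1 / 2)]

lemma noiseP_le_noiseP_mul_exp {q' : ℝ} (hq0 : 0 < q) (hq1 : q < 1) (hq'0 : 0 ≤ q')
    (hq'q : q' ≤ q) (z : BV n) :
    noiseP q' z ≤ noiseP q z * Real.exp ((q - q') * (q * n - wt z) / (q * (1 - q))) := by
  have h1q : 0 < 1 - q := by linarith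
  have hcoord : ∀ b : Bool, (if b then q' else 1 - q')
      ≤ (if b then q else 1 - q)
        * Real.exp (if b then -((q - q') / q) else (q - q') / (1 - q)) := by
    rintro (_ | _)
    · show 1 - q' ≤ (1 - q) * Real.exp ((q - q') / (1 - q))
      calc 1 - q' = (1 - q) * ((q - q') / (1 - q) + 1) := by field_simp; ring
        _ ≤ _ := mul_le_mul_of_nonneg_left (Real.add_one_le_exp _) h1q.le
    · show q' ≤ q * Real.exp (-((q - q') / q))
      calc q' = q * (1 - (q - q') / q) := by field_simp; ring
        _ ≤ _ := mul_le_mul_of_nonneg_left (Real.one_sub_le_exp_neg _) hq0.le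
  calc noiseP q' z
      ≤ ∏ i, (if z i then q else 1 - q)
          * Real.exp (if z i then -((q - q') / q) else (q - q') / (1 - q)) :=
        prod_le_prod (fun i _ => by split <;> linarith) fun i _ => hcoord (z i)
    _ = noiseP q z * Real.exp ((q - q') * (q * n - wt z) / (q * (1 - q))) := by
        rw [prod_mul_distrib, ← Real.exp_sum, sum_ite_eq_add_mul_wt, noiseP]
        congr 2
        field_simp
        ring

lemma le_sum_noiseP_wt_le (hq0 : 0 < q) (hq1 : q < 1) {c : ℝ} (hc : 0 ≤ c) (hn0 : 0 < n)
    (hn : ((c + 1) / q) ^ 2 ≤ n) {τ : ℝ} (hτ : q * n - c * Real.sqrt n ≤ τ) :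
    3 / 4 * Real.exp (-((c + 1) * (c + 2) / (q * (1 - q))))
      ≤ ∑ z : BV n, noiseP q z * (if (wt z : ℝ) ≤ τ then 1 else 0) := by
  set s := Real.sqrt n
  set K := (c + 1) * (c + 2) / (q * (1 - q))
  have hs : 0 < s := Real.sqrt_pos.2 (by exact_mod_cast hn0)
  have hns : (n : ℝ) = s * s := (Real.mul_self_sqrt (Nat.cast_nonneg n)).symm
  -- Under Bernoulli(`q'`) the weight lies within `s` of `q' n = q n - (c + 1) s` with probability
  -- at least `3 / 4`, and there the likelihood ratio `noiseP q / noiseP q'` is at least `exp (-K)`.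
  set q' := q - (c + 1) / s
  have hq'q : q' ≤ q := by simp only [q']; linarith [div_nonneg (by linarith : 0 ≤ c + 1) hs.le]
  have hq'0 : 0 ≤ q' := by
    have : (c + 1) / q ≤ s := Real.le_sqrt_of_sq_le hn
    rw [div_le_iff₀ hq0] at this
    simp only [q', sub_nonneg, div_le_iff₀ hs]
    linarith
  have hq'1 : q' ≤ 1 := by linarith
  set W : BV n → Prop := fun z => |(wt z : ℝ) - q' * n| ≤ s
  have hW : 3 / 4 ≤ ∑ z : BV n, noiseP q' z * (if W z then 1 else 0) :=
    three_div_four_le_sum_noiseP_near_mean hq'0 hq'1 hn0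
  have hq'n : q' * n = q * n - (c + 1) * s := by simp only [q']; rw [hns]; field_simp
  have hpt : ∀ z : BV n, Real.exp (-K) * (noiseP q' z * (if W z then 1 else 0))
      ≤ noiseP q z * (if (wt z : ℝ) ≤ τ then 1 else 0) := by
    intro z
    by_cases hz : W z
    · have hwt := abs_le.1 hz
      have hcs : 0 ≤ c * s := by positivity
      have hwτ : (wt z : ℝ) ≤ τ := by linarith
      have hexp : (q - q') * (q * n - wt z) / (q * (1 - q)) ≤ K := by
        apply div_le_div_of_nonneg_right _ (by nlinarith)
        calc (q - q') * (q * n - wt z) ≤ (c + 1) / s * ((c + 2) * s) :=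
              mul_le_mul (by simp only [q']; linarith) (by linarith) (by linarith) (by positivity)
          _ = (c + 1) * (c + 2) := by field_simp
      rw [if_pos hz, if_pos hwτ, mul_one, mul_one]
      calc Real.exp (-K) * noiseP q' z ≤ Real.exp (-K) * (noiseP q z * Real.exp K) := by
            gcongr
            refine (noiseP_le_noiseP_mul_exp hq0 hq1 hq'0 hq'q z).trans ?_
            gcongr
            exact noiseP_nonneg hq0.le hq1.le z
        _ = noiseP q z := by rw [Real.exp_neg]; field_simp
    · rw [if_neg hz, mul_zero, mul_zero]
      exact mul_nonneg (noiseP_nonneg hq0.le hq1.le z) (by split <;> norm_num)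
  calc 3 / 4 * Real.exp (-K)
      ≤ Real.exp (-K) * ∑ z : BV n, noiseP q' z * (if W z then 1 else 0) := by
        rw [mul_comm]; exact mul_le_mul_of_nonneg_left hW (Real.exp_pos _).le
    _ ≤ _ := by rw [mul_sum]; exact sum_le_sum fun z _ => hpt z

end Noise

section Averages

variable {N Δ : ℕ}

noncomputable def msgKeyAvg (f : Fin N → BV Δ → ℝ) : ℝ :=
  1 / ((N : ℝ) * 2 ^ Δ) * ∑ m, ∑ k, f m k

lemma msgKeyAvg_mono {f g : Fin N → BV Δ → ℝ} (h : ∀ m k, f m k ≤ g m k) :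
    msgKeyAvg f ≤ msgKeyAvg g :=
  mul_le_mul_of_nonneg_left (sum_le_sum fun m _ => sum_le_sum fun k _ => h m k) (by positivity)

lemma msgKeyAvg_nonneg {f : Fin N → BV Δ → ℝ} (h : ∀ m k, 0 ≤ f m k) :
    0 ≤ msgKeyAvg f :=
  mul_nonneg (by positivity) (sum_nonneg fun m _ => sum_nonneg fun k _ => h m k)

lemma msgKeyAvg_add (f g : Fin N → BV Δ → ℝ) :
    msgKeyAvg (fun m k => f m k + g m k) = msgKeyAvg f + msgKeyAvg g := by
  simp only [msgKeyAvg, sum_add_distrib, mul_add]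

lemma msgKeyAvg_const_le {c : ℝ} (hc : 0 ≤ c) :
    msgKeyAvg (fun (_ : Fin N) (_ : BV Δ) => c) ≤ c := by
  rcases Nat.eq_zero_or_pos N with rfl | hN
  · simpa [msgKeyAvg] using hc
  · have hN' : (0 : ℝ) < N * 2 ^ Δ := by positivity
    simp only [msgKeyAvg, sum_const, card_univ, Fintype.card_pi, Fintype.card_bool, prod_const,
      Fintype.card_fin, nsmul_eq_mul, Nat.cast_pow, Nat.cast_ofNat, ← mul_assoc]
    rw [mul_assoc _ (N : ℝ), one_div_mul_cancel hN'.ne', one_mul]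

lemma msgKeyAvg_eq_keyAvg (f : Fin N → BV Δ → ℝ) :
    msgKeyAvg f = 1 / (2 : ℝ) ^ Δ * ∑ k, (1 / (N : ℝ) * ∑ m, f m k) := by
  rw [msgKeyAvg, sum_comm, ← mul_sum, ← mul_assoc, one_div_mul_one_div, mul_comm (2 ^ Δ : ℝ)]

end Averages

section Detection

variable {n N Δ : ℕ} {q : ℝ}

noncomputable def thresholdDetector (θ : ℝ) (z : BV n) : Bool := decide (θ ≤ wt z)

noncomputable def lightFrac (C : Code n N Δ) (β : ℝ) : ℝ :=
  msgKeyAvg fun m k => if (wt (C.enc m k) : ℝ) ≤ β then 1 else 0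

lemma PFA_nonneg (hq0 : 0 ≤ q) (hq1 : q ≤ 1) (Φ : BV n → Bool) : 0 ≤ PFA q Φ :=
  sum_nonneg fun z _ => mul_nonneg (noiseP_nonneg hq0 hq1 z) (by split <;> norm_num)

lemma PMD_nonneg (hq0 : 0 ≤ q) (hq1 : q ≤ 1) (C : Code n N Δ) (Φ : BV n → Bool) :
    0 ≤ PMD q C Φ :=
  msgKeyAvg_nonneg fun _ _ => sum_nonneg fun z _ =>
    mul_nonneg (noiseP_nonneg hq0 hq1 _) (by split <;> norm_num)

lemma covertGap_le (hq0 : 0 ≤ q) (hq1 : q ≤ 1) (C : Code n N Δ) (Φ : BV n → Bool) :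
    covertGap q C ≤ PFA q Φ + PMD q C Φ :=
  ciInf_le ⟨0, by
    rintro _ ⟨Ψ, rfl⟩
    exact add_nonneg (PFA_nonneg hq0 hq1 Ψ) (PMD_nonneg hq0 hq1 C Ψ)⟩ Φ

lemma covertGap_nonneg (hq0 : 0 ≤ q) (hq1 : q ≤ 1) (C : Code n N Δ) : 0 ≤ covertGap q C :=
  le_ciInf fun Φ => add_nonneg (PFA_nonneg hq0 hq1 Φ) (PMD_nonneg hq0 hq1 C Φ)

lemma PFA_thresholdDetector_le (hq0 : 0 ≤ q) (hq1 : q ≤ 1) {t : ℝ} (ht : 0 < t) :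
    PFA q (thresholdDetector (q * n + t) : BV n → Bool) ≤ n * (q * (1 - q)) / t ^ 2 := by
  refine sum_noiseP_mul_indicator_le hq0 hq1 ht _ fun z hz => ?_
  simp only [thresholdDetector, decide_eq_true_eq] at hz
  exact (by linarith : t ≤ (wt z : ℝ) - q * n).trans (le_abs_self _)

lemma sum_noiseP_vxor_mul_thresholdDetector_le (hq0 : 0 ≤ q) (hq1 : q ≤ 1) {t : ℝ}
    (ht : 0 < t) {x : BV n} (hx : 2 * t ≤ (1 - 2 * q) * wt x) :
    ∑ z : BV n, noiseP q (vxor z x) * (if thresholdDetector (q * n + t) z then 0 else 1)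
      ≤ n * (q * (1 - q)) / t ^ 2 := by
  have hr : ∀ i, (if x i then 1 - q else q) ∈ Set.Icc (0 : ℝ) 1 := fun i => by
    split <;> constructor <;> linarith
  have hmean : ∑ i, (if x i then 1 - q else q) = q * n + (1 - 2 * q) * wt x := by
    rw [sum_ite_eq_add_mul_wt]; ring
  have hvar : ∑ i, (if x i then 1 - q else q) * (1 - if x i then 1 - q else q)
      = n * (q * (1 - q)) := by
    simp only [apply_ite (fun a : ℝ => a * (1 - a)), sum_ite_eq_add_mul_wt]; ring
  calc ∑ z : BV n, noiseP q (vxor z x) * (if thresholdDetector (q * n + t) z then 0 else 1)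
      = ∑ z : BV n, prodBern (fun i => if x i then 1 - q else q) z
          * (if (wt z : ℝ) < q * n + t then 1 else 0) :=
        sum_congr rfl fun z _ => by
          rw [noiseP_vxor_eq_prodBern, thresholdDetector]
          by_cases h : q * n + t ≤ (wt z : ℝ)
          · simp [h, not_lt.2 h]
          · simp [h, not_le.1 h]
    _ ≤ n * (q * (1 - q)) / t ^ 2 := by
        rw [← hvar]
        refine sum_prodBern_mul_indicator_le hr ht _ fun z hz => ?_
        rw [hmean, abs_sub_comm]
        exact (by linarith : t ≤ q * n + (1 - 2 * q) * wt x - wt z).trans (le_abs_self _)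

lemma covertGap_le_lightFrac (hq0 : 0 ≤ q) (hq2 : q < 1 / 2) (C : Code n N Δ) (hn : 0 < n)
    {a : ℝ} (ha : 0 < a) :
    covertGap q C
      ≤ 2 * (q * (1 - q) / a ^ 2) + lightFrac C (2 * a / (1 - 2 * q) * Real.sqrt n) := by
  have hq1 : q ≤ 1 := by linarith
  have h2q : 0 < 1 - 2 * q := by linarith
  set t := a * Real.sqrt n
  have ht : 0 < t := mul_pos ha (Real.sqrt_pos.2 (by exact_mod_cast hn))
  have hε : n * (q * (1 - q)) / t ^ 2 = q * (1 - q) / a ^ 2 := by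
    simp only [t, mul_pow, Real.sq_sqrt (Nat.cast_nonneg n)]
    field_simp
  have hε0 : 0 ≤ q * (1 - q) / a ^ 2 := by apply div_nonneg <;> nlinarith
  set Φ : BV n → Bool := thresholdDetector (q * n + t)
  have hPMD : PMD q C Φ
      ≤ q * (1 - q) / a ^ 2 + lightFrac C (2 * a / (1 - 2 * q) * Real.sqrt n) := by
    refine (msgKeyAvg_mono fun m k => ?_).trans
      ((msgKeyAvg_add _ _).trans_le (add_le_add_left (msgKeyAvg_const_le hε0) _))
    split_ifs with hlight
    · exact (sum_mul_le_one (fun z => noiseP_nonneg hq0 hq1 _) (sum_noiseP_vxor q _)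
        fun z => by split <;> norm_num).trans (by linarith)
    · rw [add_zero, ← hε]
      refine sum_noiseP_vxor_mul_thresholdDetector_le hq0 hq1 ht ?_
      rw [not_le, div_mul_eq_mul_div, div_lt_iff₀ h2q] at hlight
      linarith
  calc covertGap q C ≤ PFA q Φ + PMD q C Φ := covertGap_le hq0 hq1 C Φ
    _ ≤ _ := by linarith [PFA_thresholdDetector_le hq0 hq1 ht (n := n)]

end Detection

section Jamming

variable {n N Δ : ℕ} {p q : ℝ}

def Jammer.ofMap (F : BV n → BV n) (hF : ∀ z, (wt (F z) : ℝ) ≤ p * n) : Jammer n p where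
  W z s := if s = F z then 1 else 0
  nonneg z s := by split <;> norm_num
  sum_one z := by simp
  wt_le z s h := by
    rw [ne_eq, ite_eq_right_iff, not_forall] at h
    obtain ⟨rfl, -⟩ := h
    exact hF z

lemma Jammer.sum_ofMap_W_mul (F : BV n → BV n) (hF : ∀ z, (wt (F z) : ℝ) ≤ p * n) (z : BV n)
    (f : BV n → ℝ) : ∑ s, (Jammer.ofMap F hF).W z s * f s = f (F z) := by
  simp [Jammer.ofMap]

lemma errSilent_le_one (hq0 : 0 ≤ q) (hq1 : q ≤ 1) (C : Code n N Δ) (J : Jammer n p) :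
    errSilent q C J ≤ 1 := by
  have hk : ∀ k, ∑ zb : BV n, noiseP q zb * ∑ s : BV n, J.W zb s *
      (if C.dec s k = Option.none then (0 : ℝ) else 1) ≤ 1 := fun k =>
    sum_mul_le_one (noiseP_nonneg hq0 hq1) (sum_noiseP q) fun zb =>
      sum_mul_le_one (J.nonneg zb) (J.sum_one zb) fun s => by split <;> norm_num
  rw [errSilent, one_div_mul_eq_div]
  refine div_le_one_of_le₀ ((sum_le_sum fun k _ => hk k).trans ?_) (by positivity)
  simp

lemma errActive_le_one (hq0 : 0 ≤ q) (hq1 : q ≤ 1) (C : Code n N Δ) (J : Jammer n p) :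
    errActive q C J ≤ 1 :=
  (msgKeyAvg_mono fun m k =>
    sum_mul_le_one (noiseP_nonneg hq0 hq1) (sum_noiseP q) fun zb =>
      sum_mul_le_one (J.nonneg _) (J.sum_one _) fun s => by split <;> norm_num).trans
    (msgKeyAvg_const_le zero_le_one)

lemma le_Perr (hq0 : 0 ≤ q) (hq1 : q ≤ 1) (C : Code n N Δ) (J : Jammer n p) :
    errSilent q C J + errActive q C J ≤ Perr p q C := by
  refine le_ciSup (f := fun J => errSilent q C J + errActive q C J) ⟨2, ?_⟩ J
  rintro _ ⟨J', rfl⟩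
  linarith [errSilent_le_one hq0 hq1 C J', errActive_le_one hq0 hq1 C J']

noncomputable def replayMap (p : ℝ) (z : BV n) : BV n :=
  if (wt z : ℝ) ≤ p * n then z else fun _ => false

lemma replayMap_of_wt_le {z : BV n} (h : (wt z : ℝ) ≤ p * n) : replayMap p z = z := if_pos h

noncomputable def replayJammer (hp : 0 ≤ p) : Jammer n p :=
  Jammer.ofMap (replayMap p) fun z => by
    unfold replayMap
    split_ifs with h
    · exact h
    · rw [wt_zero, Nat.cast_zero]; positivity

lemma vxor_replayMap_vxor {β : ℝ} {x z : BV n} (hz : (wt z : ℝ) ≤ p * n - β)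
    (hx : (wt x : ℝ) ≤ β) : vxor x (replayMap p (vxor x z)) = z := by
  have hwt : (wt (vxor x z) : ℝ) ≤ wt x + wt z := by exact_mod_cast wt_vxor_le x z
  rw [replayMap_of_wt_le (by linarith), vxor_vxor_cancel_left]

lemma le_errSilent_replayJammer (hq0 : 0 ≤ q) (hq1 : q ≤ 1) (hp : 0 ≤ p) (C : Code n N Δ)
    {β : ℝ} (hβ : 0 ≤ β) :
    1 / (2 : ℝ) ^ Δ * ∑ k, ∑ z, noiseP q z * (if (wt z : ℝ) ≤ p * n - β then 1 else 0)
        * (if C.dec z k = Option.none then 0 else 1)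
      ≤ errSilent q C (replayJammer hp) := by
  simp only [errSilent, replayJammer, Jammer.sum_ofMap_W_mul]
  refine mul_le_mul_of_nonneg_left (sum_le_sum fun k _ => sum_le_sum fun z _ => ?_)
    (by positivity)
  by_cases hz : (wt z : ℝ) ≤ p * n - β
  · rw [replayMap_of_wt_le (by linarith), if_pos hz, mul_one]
  · rw [if_neg hz, mul_zero, zero_mul]
    exact mul_nonneg (noiseP_nonneg hq0 hq1 z) (by split <;> norm_num)

lemma le_errActive_replayJammer (hq0 : 0 ≤ q) (hq1 : q ≤ 1) (hp : 0 ≤ p) (C : Code n N Δ)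
    (β : ℝ) :
    msgKeyAvg (fun m k => ∑ z, noiseP q z * (if (wt z : ℝ) ≤ p * n - β then 1 else 0)
        * ((if (wt (C.enc m k) : ℝ) ≤ β then 1 else 0)
          * (if C.dec z k = some m then 0 else 1)))
      ≤ errActive q C (replayJammer hp) := by
  refine msgKeyAvg_mono fun m k => sum_le_sum fun z _ => ?_
  simp only [replayJammer, Jammer.sum_ofMap_W_mul]
  by_cases hz : (wt z : ℝ) ≤ p * n - β ∧ (wt (C.enc m k) : ℝ) ≤ β
  · rw [vxor_replayMap_vxor hz.1 hz.2, if_pos hz.1, if_pos hz.2, mul_one, one_mul]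
  · have : (if (wt z : ℝ) ≤ p * n - β then (1 : ℝ) else 0)
        * (if (wt (C.enc m k) : ℝ) ≤ β then 1 else 0) = 0 := by
      split_ifs <;> simp_all
    rw [mul_assoc, ← mul_assoc (ite _ _ _), this, zero_mul, mul_zero]
    exact mul_nonneg (noiseP_nonneg hq0 hq1 z) (by split <;> norm_num)

-- Whatever Bob decodes, he is wrong under silence or under every message but his output.
lemma avg_le_ite_none_add_avg_ite_some (o : Option (Fin N)) {ℓ : Fin N → ℝ}
    (hℓ : ∀ m, ℓ m ∈ Set.Icc (0 : ℝ) 1) :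
    1 / (N : ℝ) * ∑ m, ℓ m
      ≤ (if o = Option.none then 0 else 1)
        + 1 / (N : ℝ) * ∑ m, ℓ m * (if o = some m then 0 else 1) := by
  rcases o with _ | m₀
  · simp
  · have havg : 1 / (N : ℝ) * ∑ m, ℓ m ≤ 1 := by
      rw [one_div_mul_eq_div]
      refine div_le_one_of_le₀ ((sum_le_sum fun m _ => (hℓ m).2).trans ?_) (Nat.cast_nonneg N)
      simp
    have hrest : 0 ≤ 1 / (N : ℝ) * ∑ m, ℓ m * (if some m₀ = some m then 0 else 1) :=
      mul_nonneg (by positivity)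
        (sum_nonneg fun m _ => mul_nonneg (hℓ m).1 (by split <;> norm_num))
    simp only [reduceCtorEq, if_false]
    linarith

lemma mul_lightFrac_le_errSilent_add_errActive (hq0 : 0 ≤ q) (hq1 : q ≤ 1) (hp : 0 ≤ p)
    (C : Code n N Δ) {β : ℝ} (hβ : 0 ≤ β) :
    (∑ z : BV n, noiseP q z * (if (wt z : ℝ) ≤ p * n - β then 1 else 0)) * lightFrac C β
      ≤ errSilent q C (replayJammer hp) + errActive q C (replayJammer hp) := by
  set g : BV n → ℝ := fun z => if (wt z : ℝ) ≤ p * n - β then 1 else 0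
  set ℓ : Fin N → BV Δ → ℝ := fun m k => if (wt (C.enc m k) : ℝ) ≤ β then 1 else 0
  set eA : Fin N → BV Δ → BV n → ℝ := fun m k y => if C.dec y k = some m then 0 else 1
  calc (∑ z : BV n, noiseP q z * g z) * lightFrac C β
      = 1 / (2 : ℝ) ^ Δ * ∑ k, ∑ z, noiseP q z * g z * (1 / (N : ℝ) * ∑ m, ℓ m k) := by
        rw [lightFrac, msgKeyAvg_eq_keyAvg, mul_left_comm, mul_sum]
        simp only [sum_mul]
        rfl
    _ ≤ 1 / (2 : ℝ) ^ Δ * ∑ k, ∑ z,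
          (noiseP q z * g z * (if C.dec z k = Option.none then 0 else 1)
          + noiseP q z * g z * (1 / (N : ℝ) * ∑ m, ℓ m k * eA m k z)) := by
        refine mul_le_mul_of_nonneg_left (sum_le_sum fun k _ => sum_le_sum fun z _ => ?_)
          (by positivity)
        rw [← mul_add]
        exact mul_le_mul_of_nonneg_left
          (avg_le_ite_none_add_avg_ite_some _ fun m => by simp only [ℓ]; split <;> norm_num)
          (mul_nonneg (noiseP_nonneg hq0 hq1 z) (by simp only [g]; split <;> norm_num))
    _ = 1 / (2 : ℝ) ^ Δ * ∑ k, ∑ z,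
          noiseP q z * g z * (if C.dec z k = Option.none then 0 else 1)
          + msgKeyAvg (fun m k => ∑ z, noiseP q z * g z * (ℓ m k * eA m k z)) := by
        rw [msgKeyAvg_eq_keyAvg, ← mul_add, ← sum_add_distrib]
        congr 1
        refine sum_congr rfl fun k _ => ?_
        rw [sum_add_distrib, sum_comm (s := univ) (t := univ) (f := fun m z => _), mul_sum]
        congr 1
        refine sum_congr rfl fun z _ => ?_
        rw [mul_sum, mul_sum, mul_sum]
        exact sum_congr rfl fun m _ => by ring
    _ ≤ errSilent q C (replayJammer hp) + errActive q C (replayJammer hp) :=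
        add_le_add (le_errSilent_replayJammer hq0 hq1 hp C hβ)
          (le_errActive_replayJammer hq0 hq1 hp C β)

end Jamming

theorem no_positive_throughput_general (p q εd : ℝ)
    (hq0 : 0 < q) (hqp : q ≤ p) (hp2 : p < 1 / 2)
    (he1 : εd < 1) :
    ∀ (Δ : ℕ → ℕ) (r : ℝ), 0 < r → ¬ Achievable p q εd Δ r := by
  rintro Δ r - ⟨N, C, hcov, -, hPerr⟩
  have hq2 : q < 1 / 2 := hqp.trans_lt hp2
  have hq1 : q < 1 := by linarith
  have hqq : 0 < q * (1 - q) := by nlinarith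
  set η := (1 - εd) / 4
  have hη : 1 - εd = 4 * η := by ring
  have hη0 : 0 < η := by linarith
  set a := Real.sqrt (q * (1 - q) / η)
  have ha : 0 < a := Real.sqrt_pos.2 (by positivity)
  have ha2 : q * (1 - q) / a ^ 2 = η := by
    rw [Real.sq_sqrt (by positivity), div_div_cancel₀ hqq.ne']
  set b := 2 * a / (1 - 2 * q)
  have hb : 0 ≤ b := div_nonneg (by positivity) (by linarith)
  set δ := 3 / 4 * Real.exp (-((b + 1) * (b + 2) / (q * (1 - q))))
  have hcovert : ∀ᶠ n in atTop, 1 - εd - η < covertGap q (C n) :=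
    eventually_lt_of_lt_liminf (by linarith [show 1 - εd ≤ _ from hcov])
      (isBoundedUnder_of ⟨0, fun n => covertGap_nonneg hq0.le hq1.le (C n)⟩)
  have hreliable : ∀ᶠ n in atTop, Perr p q (C n) < δ * η :=
    hPerr.eventually_lt_const (by positivity)
  obtain ⟨n, hcov_n, hPerr_n, hn0, hn⟩ := (hcovert.and (hreliable.and
    ((eventually_gt_atTop 0).and (eventually_ge_atTop ⌈((b + 1) / q) ^ 2⌉₊)))).exists
  have hlight : η ≤ lightFrac (C n) (b * Real.sqrt n) := by
    have := covertGap_le_lightFrac hq0.le hq2 (C n) hn0 ha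
    rw [ha2] at this
    linarith
  have hnoise : δ ≤ ∑ z : BV n,
      noiseP q z * (if (wt z : ℝ) ≤ p * n - b * Real.sqrt n then 1 else 0) :=
    le_sum_noiseP_wt_le hq0 hq1 hb hn0 (Nat.ceil_le.1 hn)
      (by nlinarith [Nat.cast_nonneg (α := ℝ) n])
  have hjam := (mul_lightFrac_le_errSilent_add_errActive hq0.le hq1.le (hq0.le.trans hqp) (C n)
    (by positivity : 0 ≤ b * Real.sqrt n)).trans (le_Perr hq0.le hq1.le (C n) _)
  nlinarith [mul_le_mul hnoise hlight hη0.le ((by positivity : 0 ≤ δ).trans hnoise)]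

/-- Theorem 2, part 1.  If `0 < q ≤ p < 1/2` and
`εd ∈ (0,1)`, then for every sequence of key sizes `Δ(n)` no positive relative
throughput is achievable; i.e. the covert capacity is `0`. -/
theorem no_positive_throughput (p q εd : ℝ)
    (hq0 : 0 < q) (hqp : q ≤ p) (hp2 : p < 1 / 2)
    (he0 : 0 < εd) (he1 : εd < 1) :
    ∀ (Δ : ℕ → ℕ) (r : ℝ), 0 < r → ¬ Achievable p q εd Δ r :=
  no_positive_throughput_general p q εd hq0 hqp hp2 he1

end CovertComm
end

section
/- If the message M is uniformly distributed on F^l and the key K = (K₁,K₂) is uniformly distributed on F × F, independently of M, then the pair (M, G_K(M)) is uniformly distributed on F^l × F; that is, for every (i,j) ∈ F^l × F, P(M = i and G_K(M) = j) = 1/(|F|^l · |F|). -/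
/-!
Once the message is fixed to `i`, the hash `k₂ + ∑ k₁^u i_u` is a translate of `k₂`, so for each
`k₁` exactly one `k₂` gives `G_k(i) = j`. Hence exactly `|F|` of the `|F|^l · |F|²` pairs `(m, k)`
satisfy `m = i ∧ G_k(m) = j`.
-/

namespace PolyHash

open Finset

/-- The polynomial hash `G_k(m) = k₂ + ∑_{u=1}^{l} k₁^u · m_u`. -/
def Ghash {F : Type*} [Field F] {l : ℕ} (k : F × F) (m : Fin l → F) : F :=
  k.2 + ∑ u : Fin l, k.1 ^ (u.val + 1) * m u

theorem card_filter_snd_add_eq {α β : Type*} [Fintype α] [Fintype β] [AddGroup β]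
    [DecidableEq β] (f : α → β) (b : β) :
    #{p : α × β | p.2 + f p.1 = b} = Fintype.card α := by
  refine card_nbij' Prod.fst (fun a => (a, b - f a)) (fun _ _ => mem_coe.2 (mem_univ _))
    (fun a _ => by simp) (fun p hp => ?_) (fun _ _ => rfl)
  simp only [coe_filter, mem_univ, true_and, Set.mem_ofPred_eq] at hp
  simp [← hp]

theorem card_filter_fst_eq_and {α β : Type*} [Fintype α] [Fintype β] [DecidableEq α]
    (a : α) (P : α → β → Prop) [DecidablePred (P a)] [∀ x : α × β, Decidable (P x.1 x.2)] :
    #{x : α × β | x.1 = a ∧ P x.1 x.2} = #{y | P a y} := by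
  refine card_nbij' Prod.snd (fun y => (a, y)) ?_ (fun y hy => by simpa using hy) ?_
    (fun _ _ => rfl)
  · rintro ⟨x, y⟩ hxy
    obtain ⟨rfl, h⟩ := by simpa using hxy
    simpa using h
  · rintro ⟨x, y⟩ hxy
    obtain ⟨rfl, -⟩ := by simpa using hxy
    rfl

theorem card_filter_ghash_eq {F : Type*} [Field F] [Fintype F] [DecidableEq F] {l : ℕ}
    (m : Fin l → F) (j : F) : #{k : F × F | Ghash k m = j} = Fintype.card F :=
  card_filter_snd_add_eq (fun x => ∑ u : Fin l, x ^ (u.val + 1) * m u) j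

theorem hash_output_uniform_general (F : Type*) [Field F] [Fintype F] [DecidableEq F]
    (l : ℕ) (i : Fin l → F) (j : F) :
    ((Finset.univ.filter fun mk : (Fin l → F) × (F × F) =>
        mk.1 = i ∧ Ghash mk.2 mk.1 = j).card : ℝ)
      / (Fintype.card ((Fin l → F) × (F × F)) : ℝ)
    = 1 / ((Fintype.card F : ℝ) ^ l * (Fintype.card F : ℝ)) := by
  have hF : (Fintype.card F : ℝ) ≠ 0 := by exact_mod_cast Fintype.card_ne_zero
  rw [card_filter_fst_eq_and i fun m k => Ghash k m = j, card_filter_ghash_eq,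
    Fintype.card_prod, Fintype.card_prod, Fintype.card_fun, Fintype.card_fin]
  push_cast
  field_simp

/-- If the message `M` is uniform on `F^l` and the key
`K = (K₁,K₂)` is uniform on `F × F`, independently of `M` (so the pair
`(M, K)` is uniform on `F^l × (F × F)`), then `(M, G_K(M))` is uniform on
`F^l × F`: for every `(i, j)`,
`P(M = i ∧ G_K(M) = j) = 1 / (|F|^l · |F|)`. -/
theorem hash_output_uniform (F : Type*) [Field F] [Fintype F] [DecidableEq F]
    (l : ℕ) (hl : 1 ≤ l) (i : Fin l → F) (j : F) :
    ((Finset.univ.filter fun mk : (Fin l → F) × (F × F) =>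
        mk.1 = i ∧ Ghash mk.2 mk.1 = j).card : ℝ)
      / (Fintype.card ((Fin l → F) × (F × F)) : ℝ)
    = 1 / ((Fintype.card F : ℝ) ^ l * (Fintype.card F : ℝ)) :=
  hash_output_uniform_general F l i j

end PolyHash
end

section
/- Disambiguation by hashing (core of Lemma 3): fix (i,j) ∈ F^l × F, and let V be a finite set of pairs in F^l × F none of which equals (i,j). If K₁ is uniformly distributed on F, then the probability that there exists (i',j') ∈ V consistent with (i,j) under K₁ (i.e., j' − j = Σ_{u=1}^{l} K₁^u·(i'_u − i_u)) is at most |V| · l / |F|. -/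
namespace PolyHash

open Finset Polynomial

theorem card_filter_exists_le_card_mul {ι α : Type*} [Fintype α] [DecidableEq α]
    (s : Finset ι) (P : ι → α → Prop) [∀ i, DecidablePred (P i)] (n : ℕ)
    (h : ∀ i ∈ s, #{a | P i a} ≤ n) :
    #{a | ∃ i ∈ s, P i a} ≤ #s * n := by
  have hunion : ({a | ∃ i ∈ s, P i a} : Finset α) = s.biUnion fun i => {a | P i a} := by
    ext a
    simp
  rw [hunion]
  exact card_biUnion_le_card_mul s _ n h

theorem card_filter_sum_pow_succ_mul_eq_le {R : Type*} [CommRing R] [IsDomain R] [Fintype R]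
    [DecidableEq R] {l : ℕ} (c : Fin l → R) (d : R) (hcd : (c, d) ≠ 0) :
    #{k | d = ∑ u : Fin l, k ^ (u.val + 1) * c u} ≤ l := by
  set p : R[X] := ofFn (l + 1) (Fin.cons (-d) c)
  have heval (k : R) : p.eval k = ∑ u : Fin l, k ^ (u.val + 1) * c u - d := by
    simp only [p, ofFn_eq_sum_monomial, Fin.sum_univ_succ, eval_add, eval_finsetSum, eval_monomial]
    simp [mul_comm, sub_eq_neg_add]
  have hp : p ≠ 0 := by
    intro hp0
    have hv : (Fin.cons (-d) c : Fin (l + 1) → R) = 0 :=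
      injective_ofFn _ (hp0.trans (map_zero _).symm)
    exact hcd (Prod.ext (funext fun u => by simpa using congrFun hv u.succ)
      (by simpa using congrFun hv 0))
  have hdeg : p.natDegree ≤ l := Nat.lt_succ_iff.mp (ofFn_natDegree_lt l.succ_pos _)
  refine le_trans (card_le_degree_of_subset_roots fun k hk => ?_) hdeg
  rw [mem_roots hp, IsRoot, heval, sub_eq_zero]
  exact (mem_filter.mp hk).2.symm

open scoped Classical

theorem hash_disambiguation_general (F : Type*) [Field F] [Fintype F] [DecidableEq F]
    (l : ℕ) (i : Fin l → F) (j : F)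
    (V : Finset ((Fin l → F) × F)) (hV : ∀ x ∈ V, x ≠ (i, j)) :
    ((Finset.univ.filter fun k1 : F => ∃ x ∈ V,
        x.2 - j = ∑ u : Fin l, k1 ^ (u.val + 1) * (x.1 u - i u)).card : ℝ)
      / (Fintype.card F : ℝ)
    ≤ (V.card : ℝ) * (l : ℝ) / (Fintype.card F : ℝ) := by
  have hbad : #{k1 | ∃ x ∈ V, x.2 - j = ∑ u : Fin l, k1 ^ (u.val + 1) * (x.1 u - i u)}
      ≤ #V * l :=
    card_filter_exists_le_card_mul V _ l fun x hx =>
      card_filter_sum_pow_succ_mul_eq_le (x - (i, j)).1 (x - (i, j)).2 (sub_ne_zero.mpr (hV x hx))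
  gcongr
  exact_mod_cast hbad

/-- disambiguation by hashing, core of Lemma 3.  Fix
`(i,j) ∈ F^l × F` and a finite set `V` of pairs, none equal to `(i,j)`.  If
`K₁` is uniform on `F`, the probability that some `(i',j') ∈ V` is consistent
with `(i,j)` under `K₁` (i.e. `j' − j = ∑_{u=1}^l K₁^u (i'_u − i_u)`) is at
most `|V| · l / |F|`. -/
theorem hash_disambiguation (F : Type*) [Field F] [Fintype F] [DecidableEq F]
    (l : ℕ) (hl : 1 ≤ l) (i : Fin l → F) (j : F)
    (V : Finset ((Fin l → F) × F)) (hV : ∀ x ∈ V, x ≠ (i, j)) :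
    ((Finset.univ.filter fun k1 : F => ∃ x ∈ V,
        x.2 - j = ∑ u : Fin l, k1 ^ (u.val + 1) * (x.1 u - i u)).card : ℝ)
      / (Fintype.card F : ℝ)
    ≤ (V.card : ℝ) * (l : ℝ) / (Fintype.card F : ℝ) :=
  hash_disambiguation_general F l i j V hV

end PolyHash
end

section
/- Refined counting within a type class: let z, s ∈ {0,1}^n with the support of s contained in the support of z, wt_H(s) = w, and wt_H(z) = m. For natural numbers a ≤ m, b ≤ n − m, and i ≤ a, the number of vectors x ∈ {0,1}^n satisfying n·f^{xz}_{11}(x,z) = a, n·f^{xz}_{10}(x,z) = b, and n·f^{xs}_{11}(x,s) = i equals C(w, i) · C(m − w, a − i) · C(n − m, b), where C denotes the binomial coefficient. -/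
/-!
Binary vectors, Hamming weight, and joint-type counts.
For `x, z ∈ {0,1}^n` and `u, v ∈ {0,1}`, `fcount x z u v` is the number of
coordinates `i` with `(x_i, z_i) = (u, v)` (paper notation: `n·f^{xz}_{uv}`).
-/

namespace BinVec

open Finset

/-- Binary vectors of length `n`. -/
abbrev BV (n : ℕ) := Fin n → Bool

/-- Coordinatewise XOR of binary vectors. -/
def vxor {n : ℕ} (x y : BV n) : BV n := fun i => Bool.xor (x i) (y i)

/-- Hamming weight `wt_H`. -/
def wt {n : ℕ} (x : BV n) : ℕ := (Finset.univ.filter fun i => x i = true).card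

/-- `n·f^{xz}_{uv}(x,z)`: the number of coordinates `i` with
`(x_i, z_i) = (u, v)`. -/
def fcount {n : ℕ} (x z : BV n) (u v : Bool) : ℕ :=
  (Finset.univ.filter fun i => x i = u ∧ z i = v).card

end BinVec

/-!
Identify `x ∈ {0,1}^n` with its support `X ⊆ [n]`. With `Z = supp z` and `S = supp s ⊆ Z`, the
three conditions read `#(X ∩ S) = i`, `#(X ∩ (Z \ S)) = a - i` and `#(X \ Z) = b`, and since
`S`, `Z \ S`, `Zᶜ` partition `[n]`, the part of `X` in each block can be chosen independently.
-/

namespace Finset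

variable {α : Type*}

theorem card_filter_powerset_card_eq (s : Finset α) (k : ℕ) :
    #{A ∈ s.powerset | #A = k} = (#s).choose k := by
  rw [← powersetCard_eq_filter, card_powersetCard]

variable [DecidableEq α]

theorem card_filter_powerset_union {s t : Finset α} (hst : Disjoint s t)
    (p q : Finset α → Prop) [DecidablePred p] [DecidablePred q] :
    #{X ∈ (s ∪ t).powerset | p (X ∩ s) ∧ q (X ∩ t)} =
      #{A ∈ s.powerset | p A} * #{B ∈ t.powerset | q B} := by
  have split {A B : Finset α} (hA : A ⊆ s) (hB : B ⊆ t) : (A ∪ B) ∩ s = A ∧ (A ∪ B) ∩ t = B := by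
    have := disjoint_left.1 hst
    constructor <;> ext x <;> grind
  rw [← card_product]
  refine card_nbij' (fun X => (X ∩ s, X ∩ t)) (fun AB => AB.1 ∪ AB.2) ?_ ?_ ?_ ?_
  · intro X hX
    simp_all [inter_subset_right]
  · rintro ⟨A, B⟩ hAB
    simp only [coe_product, coe_filter, mem_powerset, Set.mem_prod, Set.mem_ofPred_eq] at hAB ⊢
    obtain ⟨⟨hA, hpA⟩, hB, hqB⟩ := hAB
    rw [(split hA hB).1, (split hA hB).2]
    exact ⟨union_subset_union hA hB, hpA, hqB⟩
  · intro X hX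
    simp only [coe_filter, mem_powerset, Set.mem_ofPred_eq] at hX
    simp [← inter_union_distrib_left, inter_eq_left.2 hX.1]
  · rintro ⟨A, B⟩ hAB
    simp only [coe_product, coe_filter, mem_powerset, Set.mem_prod, Set.mem_ofPred_eq] at hAB
    simpa only [Prod.mk.injEq] using split hAB.1.1 hAB.2.1

theorem card_filter_powerset_card_inter {s t : Finset α} (hst : s ⊆ t) {a i : ℕ} (hi : i ≤ a) :
    #{A ∈ t.powerset | #A = a ∧ #(A ∩ s) = i} = (#s).choose i * (#t - #s).choose (a - i) := by
  have hsplit (A) (hA : A ∈ t.powerset) :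
      (#A = a ∧ #(A ∩ s) = i) ↔ (#(A ∩ s) = i ∧ #(A ∩ (t \ s)) = a - i) := by
    rw [← inter_sdiff_assoc, inter_eq_left.2 (mem_powerset.1 hA), ← card_inter_add_card_sdiff A s]
    omega
  have hprod := card_filter_powerset_union (disjoint_sdiff (s := s) (t := t)) (#· = i) (#· = a - i)
  rw [union_sdiff_of_subset hst] at hprod
  rw [filter_congr hsplit, hprod, card_filter_powerset_card_eq, card_filter_powerset_card_eq,
    card_sdiff_of_subset hst]

end Finset

def Equiv.arrowBoolFinset (α : Type*) [Fintype α] [DecidableEq α] : (α → Bool) ≃ Finset α where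
  toFun x := {i | x i = true}
  invFun X i := decide (i ∈ X)
  left_inv x := by funext i; simp
  right_inv X := by ext i; simp

@[simp]
theorem Equiv.mem_arrowBoolFinset {α : Type*} [Fintype α] [DecidableEq α] (x : α → Bool) (i : α) :
    i ∈ arrowBoolFinset α x ↔ x i = true := by
  simp [arrowBoolFinset]

namespace BinVec

open Finset Equiv

theorem wt_eq_card_arrowBoolFinset {n : ℕ} (x : BV n) : wt x = #(arrowBoolFinset _ x) := rfl

theorem fcount_true_true {n : ℕ} (x z : BV n) :
    fcount x z true true = #(arrowBoolFinset _ x ∩ arrowBoolFinset _ z) := by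
  rw [fcount, filter_and]; rfl

theorem fcount_true_false {n : ℕ} (x z : BV n) :
    fcount x z true false = #(arrowBoolFinset _ x \ arrowBoolFinset _ z) := by
  simp only [fcount, Bool.eq_false_iff, ne_eq, filter_and_not]; rfl

theorem refined_type_class_card_general {n : ℕ} (z s : BV n) (w m a b i : ℕ)
    (hsupp : ∀ idx : Fin n, s idx = true → z idx = true)
    (hw : wt s = w) (hm : wt z = m)
    (hi : i ≤ a) :
    (Finset.univ.filter fun x : BV n =>
        fcount x z true true = a ∧ fcount x z true false = b ∧
          fcount x s true true = i).card
      = Nat.choose w i * Nat.choose (m - w) (a - i) * Nat.choose (n - m) b := by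
  set Z := arrowBoolFinset _ z
  set S := arrowBoolFinset _ s
  have hSZ : S ⊆ Z := fun idx h =>
    (mem_arrowBoolFinset z idx).2 (hsupp idx ((mem_arrowBoolFinset s idx).1 h))
  calc _ = #{X ∈ (Z ∪ Zᶜ).powerset | (#(X ∩ Z) = a ∧ #(X ∩ Z ∩ S) = i) ∧ #(X ∩ Zᶜ) = b} := by
        refine card_equiv (arrowBoolFinset _) fun x => ?_
        simp only [union_compl, powerset_univ, mem_filter, mem_univ, true_and, inter_assoc,
          inter_eq_right.2 hSZ, ← sdiff_eq_inter_compl, fcount_true_true, fcount_true_false]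
        tauto
    _ = _ := by
      rw [card_filter_powerset_union disjoint_compl_right (fun A => #A = a ∧ #(A ∩ S) = i) (#· = b),
        card_filter_powerset_card_inter hSZ hi, card_filter_powerset_card_eq, card_compl,
        Fintype.card_fin, ← hw, ← hm, wt_eq_card_arrowBoolFinset, wt_eq_card_arrowBoolFinset]

/-- refined counting within a type class.  Let
`z, s ∈ {0,1}^n` with `supp(s) ⊆ supp(z)`, `wt_H(s) = w`, `wt_H(z) = m`.
For `a ≤ m`, `b ≤ n − m` and `i ≤ a`, the number of `x ∈ {0,1}^n` with
`n·f^{xz}_{11}(x,z) = a`, `n·f^{xz}_{10}(x,z) = b` and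
`n·f^{xs}_{11}(x,s) = i` equals `C(w,i) · C(m−w, a−i) · C(n−m, b)`. -/
theorem refined_type_class_card {n : ℕ} (z s : BV n) (w m a b i : ℕ)
    (hsupp : ∀ idx : Fin n, s idx = true → z idx = true)
    (hw : wt s = w) (hm : wt z = m)
    (ha : a ≤ m) (hb : b ≤ n - m) (hi : i ≤ a) :
    (Finset.univ.filter fun x : BV n =>
        fcount x z true true = a ∧ fcount x z true false = b ∧
          fcount x s true true = i).card
      = Nat.choose w i * Nat.choose (m - w) (a - i) * Nat.choose (n - m) b :=
  refined_type_class_card_general z s w m a b i hsupp hw hm hi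

end BinVec
end

section
/- Unimodality of hypergeometric terms: let a, b, c be natural numbers with c ≤ b, define g(i) = C(a, i)·C(b, c − i), and let φ = (a·c + c − b − 1)/(a + b + 2) (as a rational number). Then for every natural number i with i < a and i < c: if i < φ then g(i + 1) > g(i), and if i > φ then g(i + 1) < g(i). -/
/-!
Write `g i = C(a, i) · C(b, c - i)`. Absorbing the factors `i + 1` and `c - i` into the two
binomial coefficients gives `(a - i)(c - i) · g i = (i + 1)(b - c + i + 1) · g (i + 1)`, so
`g` increases exactly when `(i + 1)(b - c + i + 1) < (a - i)(c - i)`. The difference of the two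
sides is `(a c + c - b - 1) - i (a + b + 2)`, which is positive exactly when `i < φ`.
-/

theorem Nat.cast_choose_succ_mul {R : Type*} [CommRing R] (n k : ℕ) :
    (n.choose (k + 1) : R) * (k + 1) = n.choose k * (n - k) := by
  rcases le_or_gt k n with hkn | hnk
  · have h := congrArg (Nat.cast : ℕ → R) (Nat.choose_succ_right_eq n k)
    push_cast [hkn] at h
    exact h
  · simp [Nat.choose_eq_zero_of_lt hnk, Nat.choose_eq_zero_of_lt (Nat.lt_succ_of_lt hnk)]

theorem lt_iff_lt_of_mul_eq_mul {α : Type*} [Semiring α] [LinearOrder α] [IsStrictOrderedRing α]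
    {A B x y : α} (hB : 0 < B) (hx : 0 < x) (h : A * x = B * y) : x < y ↔ B < A := by
  rw [← mul_lt_mul_iff_right₀ hB, ← h, mul_lt_mul_iff_left₀ hx]

def hypergeomTerm (a b c i : ℕ) : ℕ := a.choose i * b.choose (c - i)

def hypergeomMode (a b c : ℕ) : ℚ := ((a : ℚ) * c + c - b - 1) / ((a : ℚ) + b + 2)

section

variable {a b c i : ℕ}

theorem hypergeomTerm_pos (hcb : c ≤ b) (hia : i ≤ a) : 0 < hypergeomTerm a b c i :=
  Nat.mul_pos (Nat.choose_pos hia) (Nat.choose_pos (by omega))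

theorem cast_hypergeomTerm_mul_eq {R : Type*} [CommRing R] (hic : i < c) :
    ((a : R) - i) * (c - i) * hypergeomTerm a b c i
      = (i + 1) * (b - c + i + 1) * hypergeomTerm a b c (i + 1) := by
  have ha := Nat.cast_choose_succ_mul (R := R) a i
  have hb := Nat.cast_choose_succ_mul (R := R) b (c - (i + 1))
  rw [show c - (i + 1) + 1 = c - i by omega, Nat.cast_sub (by omega : i + 1 ≤ c)] at hb
  push_cast at hb
  simp only [hypergeomTerm, Nat.cast_mul]
  linear_combination (a.choose (i + 1) : R) * (i + 1) * hb - (b.choose (c - i) : R) * (c - i) * ha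

theorem hypergeomMode_sub_mul_eq (x : ℚ) :
    ((a : ℚ) - x) * (c - x) - (x + 1) * (b - c + x + 1)
      = (a + b + 2) * (hypergeomMode a b c - x) := by
  rw [hypergeomMode]
  field_simp
  ring

theorem lt_hypergeomMode_iff (x : ℚ) :
    x < hypergeomMode a b c ↔ (x + 1) * (b - c + x + 1) < ((a : ℚ) - x) * (c - x) := by
  rw [← sub_pos (a := ((a : ℚ) - x) * (c - x)), hypergeomMode_sub_mul_eq,
    mul_pos_iff_of_pos_left (by positivity), sub_pos]

theorem hypergeomMode_lt_iff (x : ℚ) :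
    hypergeomMode a b c < x ↔ ((a : ℚ) - x) * (c - x) < (x + 1) * (b - c + x + 1) := by
  rw [← sub_pos (b := ((a : ℚ) - x) * (c - x)), ← neg_sub, hypergeomMode_sub_mul_eq, ← mul_neg,
    neg_sub, mul_pos_iff_of_pos_left (by positivity), sub_pos]

end

/-- unimodality of hypergeometric terms.  Let `a, b, c` be
natural numbers with `c ≤ b`, put `g(i) = C(a,i) · C(b, c−i)` and let
`φ = (a·c + c − b − 1)/(a + b + 2)` as a rational number.  Then for every `i`
with `i < a` and `i < c`: if `i < φ` then `g(i+1) > g(i)`, and if `i > φ`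
then `g(i+1) < g(i)`. -/
theorem hypergeom_unimodal (a b c i : ℕ) (hcb : c ≤ b)
    (hia : i < a) (hic : i < c) :
    ((i : ℚ) < ((a : ℚ) * c + c - b - 1) / ((a : ℚ) + b + 2) →
      Nat.choose a i * Nat.choose b (c - i)
        < Nat.choose a (i + 1) * Nat.choose b (c - (i + 1))) ∧
    (((a : ℚ) * c + c - b - 1) / ((a : ℚ) + b + 2) < (i : ℚ) →
      Nat.choose a (i + 1) * Nat.choose b (c - (i + 1))
        < Nat.choose a i * Nat.choose b (c - i)) := by
  have hg : ((a : ℚ) - i) * (c - i) * hypergeomTerm a b c i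
      = (i + 1) * (b - c + i + 1) * hypergeomTerm a b c (i + 1) := cast_hypergeomTerm_mul_eq hic
  have hA : (0 : ℚ) < (a - i) * (c - i) :=
    mul_pos (sub_pos.2 (by exact_mod_cast hia)) (sub_pos.2 (by exact_mod_cast hic))
  have hB : (0 : ℚ) < (i + 1) * (b - c + i + 1) := by
    have : (c : ℚ) ≤ b := by exact_mod_cast hcb
    exact mul_pos (by positivity) (by linarith)
  have hgi : (0 : ℚ) < hypergeomTerm a b c i := by exact_mod_cast hypergeomTerm_pos hcb hia.le
  have hgi' : (0 : ℚ) < hypergeomTerm a b c (i + 1) := by exact_mod_cast hypergeomTerm_pos hcb hia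
  refine ⟨fun h => ?_, fun h => ?_⟩
  · exact_mod_cast (lt_iff_lt_of_mul_eq_mul hB hgi hg).2 ((lt_hypergeomMode_iff _).1 h)
  · exact_mod_cast (lt_iff_lt_of_mul_eq_mul hA hgi' hg.symm).2 ((hypergeomMode_lt_iff _).1 h)
end
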